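/- Let K be a locally compact Hausdorff space. Then there exists a continuous function f : K → ℝ vanishing at infinity with f(t) > 0 for every t ∈ K (a strictly positive element of C₀(K), i.e., C₀(K) is σ-unital) if and only if K is σ-compact. -/

import Mathlib

open ZeroAtInfty

/-!
If `f ∈ C₀(K)` vanishes nowhere, the superlevel sets `{1/(n+1) ≤ ‖f‖}` are compact and exhaust `K`.
Conversely, Urysohn's lemma gives compactly supported `gₙ : K → [0,1]` equal to `1` on the `n`-th
set of a compact cover, and `∑ 2⁻ⁿ gₙ / (‖gₙ‖ + 1)` converges in the Banach space `C₀(K)` to a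
function that is positive everywhere.
-/

open Set Filter

namespace ZeroAtInftyContinuousMap

variable {X E : Type*} [TopologicalSpace X] [NormedAddCommGroup E]

theorem isCompact_setOf_le_norm (f : C₀(X, E)) {ε : ℝ} (hε : 0 < ε) :
    IsCompact {x | ε ≤ ‖f x‖} := by
  have hsmall : {x | ε ≤ ‖f x‖}ᶜ ∈ cocompact X := by
    filter_upwards [zero_at_infty f (Metric.ball_mem_nhds 0 hε)] with x hx
    simpa using hx
  obtain ⟨t, ht, hsub⟩ := mem_cocompact'.mp hsmall
  exact ht.of_isClosed_subset (isClosed_le continuous_const (map_continuous f).norm)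
    (by simpa using hsub)

theorem sigmaCompactSpace_of_forall_ne_zero (f : C₀(X, E)) (hf : ∀ x, f x ≠ 0) :
    SigmaCompactSpace X := by
  refine ⟨⟨fun n => {x | 1 / (n + 1 : ℝ) ≤ ‖f x‖},
    fun n => f.isCompact_setOf_le_norm (by positivity), ?_⟩⟩
  refine eq_univ_of_forall fun x => mem_iUnion.mpr ?_
  obtain ⟨n, hn⟩ := exists_nat_one_div_lt (norm_pos_iff.mpr (hf x))
  exact ⟨n, hn.le⟩

theorem hasSum_apply {ι : Type*} {f : ι → C₀(X, E)} {F : C₀(X, E)} (h : HasSum f F) (x : X) :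
    HasSum (fun i => f i x) (F x) :=
  h.map (⟨⟨fun g : C₀(X, E) => g x, rfl⟩, fun _ _ => rfl⟩ : C₀(X, E) →+ E)
    ((continuous_eval_const x).comp isometry_toBCF.continuous)

theorem exists_forall_pos_of_forall_exists_pos (g : ℕ → C₀(X, ℝ)) (hg : ∀ n x, 0 ≤ g n x)
    (hcover : ∀ x, ∃ n, 0 < g n x) : ∃ f : C₀(X, ℝ), ∀ x, 0 < f x := by
  set c : ℕ → ℝ := fun n => (1 / 2) ^ n / (‖g n‖ + 1)
  have hc : ∀ n, 0 < c n := fun n => by positivity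
  have hbound : ∀ n, ‖c n • g n‖ ≤ (1 / 2) ^ n := fun n => by
    rw [norm_smul, Real.norm_of_nonneg (hc n).le, div_mul_eq_mul_div]
    exact div_le_of_le_mul₀ (by positivity) (by positivity)
      (mul_le_mul_of_nonneg_left (by linarith) (by positivity))
  have hsum : Summable fun n => c n • g n :=
    .of_norm_bounded (summable_geometric_of_lt_one (by norm_num) (by norm_num)) hbound
  refine ⟨∑' n, c n • g n, fun x => ?_⟩
  obtain ⟨n, hn⟩ := hcover x
  exact hasSum_lt (fun m => mul_nonneg (hc m).le (hg m x)) (mul_pos (hc n) hn) hasSum_zero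
    (hasSum_apply hsum.hasSum x)

theorem exists_forall_pos_of_sigmaCompactSpace [RegularSpace X] [LocallyCompactSpace X]
    [SigmaCompactSpace X] : ∃ f : C₀(X, ℝ), ∀ x, 0 < f x := by
  choose g hg_one _ hg_supp hg_mem using fun n => exists_continuous_one_zero_of_isCompact
    (isCompact_compactCovering X n) isClosed_empty (disjoint_empty _)
  refine exists_forall_pos_of_forall_exists_pos (fun n => ⟨g n, (hg_supp n).is_zero_at_infty⟩)
    (fun n x => (hg_mem n x).1) fun x => ?_
  obtain ⟨n, hn⟩ := exists_mem_compactCovering x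
  exact ⟨n, (hg_one n hn).symm ▸ one_pos⟩

end ZeroAtInftyContinuousMap

/-- The `C*`-algebra `C₀(K)` is `σ`-unital (i.e., it contains a strictly positive element,
which for `C₀(K)` means an everywhere positive function vanishing at infinity)
if and only if `K` is `σ`-compact. -/
theorem strictly_positive_iff_sigmaCompact
    (K : Type*) [TopologicalSpace K] [LocallyCompactSpace K] [T2Space K] :
    (∃ f : C₀(K, ℝ), ∀ t : K, 0 < f t) ↔ SigmaCompactSpace K :=
  ⟨fun ⟨f, hf⟩ => f.sigmaCompactSpace_of_forall_ne_zero fun t => (hf t).ne',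
    fun _ => ZeroAtInftyContinuousMap.exists_forall_pos_of_sigmaCompactSpace⟩
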